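/- arXiv:2604.05299 — 6 statements merged into one kernel-verified Lean document; each statement's English description precedes it below -/
import Mathlib

section
/- For the discontinuous Galerkin discrete derivative operators D_h^+ and D_h^- on a periodic mesh (defined with upwind-type one-sided fluxes φ^+ and φ^- respectively), one has the adjoint relation (D_h^+ φ, ψ) = −(φ, D_h^- ψ) for all φ, ψ in the piecewise polynomial space U_h^r, i.e. D_h^+ = −(D_h^-)^T. -/
open Finset intervalIntegral

/-- The DG bilinear form `(𝒟_h^- φ, ψ)` on a periodic mesh of `N` cells with nodes
`a 0 < a 1 < … < a N` (periodically identified): piecewise polynomials are encoded by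
their polynomial restriction on each cell; the flux is the left trace `φ⁻`. -/
noncomputable def dgBminus (N : ℕ) [NeZero N] (a : ℕ → ℝ) (φ ψ : Fin N → Polynomial ℝ) : ℝ :=
  -(∑ j : Fin N, ∫ x in a (j : ℕ)..a ((j : ℕ) + 1), (φ j).eval x * ((ψ j).derivative.eval x))
    - ∑ j : Fin N, (φ (j - 1)).eval (a (((j - 1 : Fin N) : ℕ) + 1)) *
        ((ψ j).eval (a (j : ℕ)) - (ψ (j - 1)).eval (a (((j - 1 : Fin N) : ℕ) + 1)))

/-- The DG bilinear form `(𝒟_h^+ φ, ψ)`, with the flux being the right trace `φ⁺`. -/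
noncomputable def dgBplus (N : ℕ) [NeZero N] (a : ℕ → ℝ) (φ ψ : Fin N → Polynomial ℝ) : ℝ :=
  -(∑ j : Fin N, ∫ x in a (j : ℕ)..a ((j : ℕ) + 1), (φ j).eval x * ((ψ j).derivative.eval x))
    - ∑ j : Fin N, (φ j).eval (a (j : ℕ)) *
        ((ψ j).eval (a (j : ℕ)) - (ψ (j - 1)).eval (a (((j - 1 : Fin N) : ℕ) + 1)))

/-! Integrating by parts on each cell turns the two volume terms into the jump of `φ ψ` across
the cell; on a periodic mesh these cancel the flux terms, since after the shift `j ↦ j - 1` the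
right-trace products of cell `j - 1` are summed as those of cell `j`. -/

theorem Polynomial.integral_eval_mul_derivative_add (p q : Polynomial ℝ) (a b : ℝ) :
    (∫ x in a..b, p.eval x * q.derivative.eval x) + ∫ x in a..b, q.eval x * p.derivative.eval x
      = (p * q).eval b - (p * q).eval a := by
  rw [← integral_add (f := fun x => p.eval x * q.derivative.eval x)
    (g := fun x => q.eval x * p.derivative.eval x)
    ((p.continuous.mul q.derivative.continuous).intervalIntegrable _ _)
    ((q.continuous.mul p.derivative.continuous).intervalIntegrable _ _)]
  simpa only [Polynomial.eval_mul, add_comm, mul_comm] using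
    integral_deriv_mul_eq_sub (fun x _ => p.hasDerivAt x) (fun x _ => q.hasDerivAt x)
      (p.derivative.continuous.intervalIntegrable _ _)
      (q.derivative.continuous.intervalIntegrable _ _)

theorem stmt_6_general (N : ℕ) [NeZero N] (a : ℕ → ℝ)
    (φ ψ : Fin N → Polynomial ℝ) :
    dgBplus N a φ ψ = -(dgBminus N a ψ φ) := by
  set R : Fin N → ℝ := fun j => (φ j * ψ j).eval (a ((j : ℕ) + 1))
  set L : Fin N → ℝ := fun j => (φ j * ψ j).eval (a j)
  have hshift : ∑ j, R (j - 1) = ∑ j, R j := Equiv.sum_comp (Equiv.subRight 1) R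
  have hcells : dgBplus N a φ ψ + dgBminus N a ψ φ = ∑ j, ((L j - R j) + (R (j - 1) - L j)) := by
    unfold dgBplus dgBminus
    simp only [sub_eq_add_neg, ← sum_neg_distrib, ← sum_add_distrib]
    refine sum_congr rfl fun j _ => ?_
    have hparts := (φ j).integral_eval_mul_derivative_add (ψ j) (a j) (a ((j : ℕ) + 1))
    simp only [R, L, Polynomial.eval_mul] at hparts ⊢
    linear_combination -hparts
  rw [eq_neg_iff_add_eq_zero, hcells, sum_add_distrib, sum_sub_distrib, sum_sub_distrib, hshift]
  ring

/-- Adjoint relation for the DG derivative operators on a periodic mesh: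
`(𝒟_h^+ φ, ψ) = −(φ, 𝒟_h^- ψ)`, i.e. `𝒟_h^+ = −(𝒟_h^-)ᵀ`. -/
theorem stmt_6 (N : ℕ) [NeZero N] (a : ℕ → ℝ) (ha : StrictMonoOn a (Set.Iic N))
    (φ ψ : Fin N → Polynomial ℝ) :
    dgBplus N a φ ψ = -(dgBminus N a ψ φ) :=
  stmt_6_general N a φ ψ
end

section
/- Moment-preservation of the IMEX-BDF-DG scheme: if the initial data satisfy ⟨g_h^k⟩_h = 0 for k = 0, 1, ..., s−1, then the numerical solutions of the IMEX-BDF-DG scheme with any of the three IMEX partitionings satisfy ⟨g_h^n⟩_h = 0 for all n ≥ s. -/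
/-!
Averaging the micro update over the velocity nodes kills the transport term, because
`D_h^up(g; v_q) - ⟨D_h^up(g; v)⟩_h` has mean zero when the weights sum to one, and kills
the `ρ`-gradient terms, because `⟨v⟩_h = 0`. What remains is the scalar linear recurrence
`lam ⟨g^{n+s}⟩_h = Σ_k (a_k - dex_k) ⟨g^{n+k}⟩_h` with `lam ≠ 0`, whose solution vanishes
identically once its first `s` values do.
-/

open Finset

section WeightedSum

variable {ι κ R V : Type*} [Fintype ι] [Fintype κ]

theorem sum_smul_sum_smul_comm [CommSemiring R] [AddCommMonoid V] [Module R V]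
    (ω : ι → R) (c : κ → R) (x : κ → ι → V) :
    ∑ q, ω q • ∑ k, c k • x k q = ∑ k, c k • ∑ q, ω q • x k q := by
  simp only [smul_sum]
  rw [sum_comm]
  simp only [smul_comm (ω _)]

theorem sum_smul_sub_sum_smul [Ring R] [AddCommGroup V] [Module R V] {ω : ι → R} (hω1 : ∑ q, ω q = 1) (y : ι → V) :
    ∑ q, ω q • (y q - ∑ q', ω q' • y q') = 0 := by
  rw [sum_congr rfl fun q _ => smul_sub (ω q) _ _, sum_sub_distrib, ← sum_smul, hω1,
    one_smul, sub_self]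

theorem sum_smul_smul_eq_zero [Semiring R] [AddCommMonoid V] [Module R V] {ω v : ι → R} (hv : ∑ q, ω q * v q = 0) (x : V) :
    ∑ q, ω q • v q • x = 0 := by
  simp only [smul_smul, ← sum_smul, hv, zero_smul]

end WeightedSum

theorem eq_zero_of_smul_eq_sum_smul {R V : Type*} [DivisionRing R] [AddCommGroup V] [Module R V]
    {s : ℕ} {lam : R} (hlam : lam ≠ 0) (c : Fin s → R) {u : ℕ → V}
    (hrec : ∀ n, lam • u (n + s) = ∑ k : Fin s, c k • u (n + k))
    (hinit : ∀ k < s, u k = 0) (n : ℕ) : u n = 0 := by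
  induction n using Nat.strong_induction_on with
  | _ n ih =>
    rcases lt_or_ge n s with hn | hn
    · exact hinit n hn
    · obtain ⟨m, rfl⟩ := Nat.exists_eq_add_of_le' hn
      have hlow : ∑ k : Fin s, c k • u (m + k) = 0 :=
        sum_eq_zero fun k _ => by rw [ih _ (by omega), smul_zero]
      exact (smul_eq_zero.mp ((hrec m).trans hlow)).resolve_left hlam

/-- The micro update is written in a form covering all three IMEX partitionings: the
implicit scalar `lam = 1 + Δt c_s σ_s/ε² (+ Δt c_s σ_a)`, transport coefficients
`d1 k = Δt b_k/ε`, explicit/implicit `ρ`-gradient coefficients `β, γ` (acting on the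
data `r n = 𝒟_h^- ρ_h^n`), and explicit absorption coefficients `dex`. -/
theorem stmt_8_general {Vsp : Type*} [AddCommGroup Vsp] [Module ℝ Vsp]
    (Nv s : ℕ)
    (ω v : Fin Nv → ℝ) (hω1 : ∑ q, ω q = 1)
    (hv : ∑ q, ω q * v q = 0)
    (a d1 β dex : Fin s → ℝ) (γ lam : ℝ) (hlam : lam ≠ 0)
    (Dup : Fin Nv → (Fin Nv → Vsp) → Vsp)   -- upwind DG transport at node v_q
    (r : ℕ → Vsp)                            -- 𝒟_h^- ρ_h^n data
    (g : ℕ → Fin Nv → Vsp)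
    (hrec : ∀ n : ℕ, ∀ q : Fin Nv,
      lam • g (n + s) q
        = (∑ k : Fin s, a k • g (n + (k : ℕ)) q)
          - (∑ k : Fin s, d1 k •
              (Dup q (g (n + (k : ℕ))) - ∑ q', ω q' • Dup q' (g (n + (k : ℕ)))))
          - (∑ k : Fin s, β k • ((v q) • r (n + (k : ℕ))))
          - γ • ((v q) • r (n + s))
          - ∑ k : Fin s, dex k • g (n + (k : ℕ)) q)
    (hinit : ∀ k < s, (∑ q, ω q • g k q) = (0 : Vsp)) :
    ∀ n, s ≤ n → (∑ q, ω q • g n q) = (0 : Vsp) := by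
  have hmean : ∀ n, lam • ∑ q, ω q • g (n + s) q
      = ∑ k : Fin s, (a - dex) k • ∑ q, ω q • g (n + k) q := by
    intro n
    rw [smul_sum]
    simp only [smul_comm lam, hrec, smul_sub (ω _), sum_sub_distrib]
    simp only [sum_smul_sum_smul_comm ω, smul_comm (ω _) γ]
    rw [← smul_sum]
    simp only [sum_smul_sub_sum_smul hω1, sum_smul_smul_eq_zero hv, smul_zero, sum_const_zero,
      sub_zero, Pi.sub_apply, sub_smul, sum_sub_distrib]
  exact fun n _ => eq_zero_of_smul_eq_sum_smul hlam (a - dex) hmean hinit n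

/-- Moment preservation of the IMEX-BDF-DG scheme: if the initialization satisfies
`⟨g_h^k⟩_h = 0` for `k = 0, …, s−1`, then `⟨g_h^n⟩_h = 0` for all `n ≥ s`.
The micro update is written in a form covering all three IMEX partitionings: the
implicit scalar `lam = 1 + Δt c_s σ_s/ε² (+ Δt c_s σ_a)`, transport coefficients
`d1 k = Δt b_k/ε`, explicit/implicit `ρ`-gradient coefficients `β, γ` (acting on the
data `r n = 𝒟_h^- ρ_h^n`), and explicit absorption coefficients `dex`. -/
theorem stmt_8 {Vsp : Type*} [AddCommGroup Vsp] [Module ℝ Vsp]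
    (Nv s : ℕ) [NeZero Nv] (hs : 1 ≤ s)
    (ω v : Fin Nv → ℝ) (hω : ∀ q, 0 < ω q) (hω1 : ∑ q, ω q = 1)
    (hv : ∑ q, ω q * v q = 0)
    (a d1 β dex : Fin s → ℝ) (γ lam : ℝ) (hlam : lam ≠ 0)
    (Dup : Fin Nv → (Fin Nv → Vsp) → Vsp)   -- upwind DG transport at node v_q
    (r : ℕ → Vsp)                            -- 𝒟_h^- ρ_h^n data
    (g : ℕ → Fin Nv → Vsp)
    (hrec : ∀ n : ℕ, ∀ q : Fin Nv,
      lam • g (n + s) q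
        = (∑ k : Fin s, a k • g (n + (k : ℕ)) q)
          - (∑ k : Fin s, d1 k •
              (Dup q (g (n + (k : ℕ))) - ∑ q', ω q' • Dup q' (g (n + (k : ℕ)))))
          - (∑ k : Fin s, β k • ((v q) • r (n + (k : ℕ))))
          - γ • ((v q) • r (n + s))
          - ∑ k : Fin s, dex k • g (n + (k : ℕ)) q)
    (hinit : ∀ k < s, (∑ q, ω q • g k q) = (0 : Vsp)) :
    ∀ n, s ≤ n → (∑ q, ω q • g n q) = (0 : Vsp) :=
  stmt_8_general Nv s ω v hω1 hv a d1 β dex γ lam hlam Dup r g hrec hinit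
end

section
/- Scaling structure of the Fourier amplification matrix: with σ_a = 0, for all s, r ≥ 1 the amplification matrix G^{(s,r)}(ε, σ_{s,m}, h, Δt; ξ) of the IMEX-BDF s-step DG scheme is similar (via an explicit block-diagonal scaling S_h = diag(σ_{s,m} h I_r, I_{rN_v}) repeated blockwise) to a matrix Ĝ^{(s,r)} depending on the parameters only through the two ratios ε/(σ_{s,m} h) and Δt/(ε h). Consequently the eigenvalues of G^{(s,r)} depend on (ε, σ_{s,m}, h, Δt) only through these two ratios. -/
open Finset Matrix

/-- Index type for one Fourier unknown vector `(ρ̂, ĝ_1, …, ĝ_{N_v})`, each component having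
`r` modal coefficients. -/
abbrev fIdx (r Nv : ℕ) := Fin r ⊕ (Fin Nv × Fin r)

/-- The block `G_{L,s}` of the Fourier-transformed IMEX-BDF-DG scheme (σ_a = 0). -/
noncomputable def GLblock (r Nv : ℕ) (Mhat Dp : Matrix (Fin r) (Fin r) ℂ)
    (ω v : Fin Nv → ℝ) (ε σ hm Δt c : ℝ) :
    Matrix (fIdx r Nv) (fIdx r Nv) ℂ :=
  Matrix.fromBlocks (((hm : ℝ) : ℂ) • Mhat)
    (Matrix.of fun i qj => ((Δt * c * ω qj.1 * v qj.1 : ℝ) : ℂ) * Dp i qj.2)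
    0
    (Matrix.of fun qi qj =>
      if qi.1 = qj.1 then ((hm * (ε ^ 2 + Δt * c * σ) : ℝ) : ℂ) * Mhat qi.2 qj.2 else 0)

/-- The block `G_{R,n+k}` of the Fourier-transformed IMEX-BDF-DG scheme (σ_a = 0), with
BDF coefficients `ak = a_k`, `bk = b_k`. -/
noncomputable def GRblock (r Nv : ℕ) (Mhat Dm : Matrix (Fin r) (Fin r) ℂ)
    (Uhat Phat : Fin Nv → Matrix (Fin r) (Fin r) ℂ) (v : Fin Nv → ℝ)
    (ak bk : ℝ) (ε hm Δt : ℝ) : Matrix (fIdx r Nv) (fIdx r Nv) ℂ :=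
  Matrix.fromBlocks (((ak * hm : ℝ) : ℂ) • Mhat) 0
    (Matrix.of fun qi j => ((-(v qi.1) * Δt * bk : ℝ) : ℂ) * Dm qi.2 j)
    (Matrix.of fun qi qj =>
      (if qi.1 = qj.1 then
          ((ak * ε ^ 2 * hm : ℝ) : ℂ) * Mhat qi.2 qj.2
            - ((ε * Δt * bk : ℝ) : ℂ) * Uhat qi.1 qi.2 qj.2
        else 0)
      + ((ε * Δt * bk : ℝ) : ℂ) * Phat qj.1 qi.2 qj.2)

/-- The companion matrix `𝒢_L` of the `s`-step scheme. -/
noncomputable def bigGL (s r Nv : ℕ) (Mhat Dp : Matrix (Fin r) (Fin r) ℂ)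
    (ω v : Fin Nv → ℝ) (ε σ hm Δt c : ℝ) :
    Matrix (Fin s × fIdx r Nv) (Fin s × fIdx r Nv) ℂ :=
  Matrix.of fun pi pj =>
    if (pi.1 : ℕ) = 0 then
      (if (pj.1 : ℕ) = 0 then GLblock r Nv Mhat Dp ω v ε σ hm Δt c pi.2 pj.2 else 0)
    else (if pi = pj then 1 else 0)

/-- The companion matrix `𝒢_R` of the `s`-step scheme; the column block `p'` carries the
coefficient index `k = s − 1 − p'` (`Fin.rev`). -/
noncomputable def bigGR (s r Nv : ℕ) (Mhat Dm : Matrix (Fin r) (Fin r) ℂ)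
    (Uhat Phat : Fin Nv → Matrix (Fin r) (Fin r) ℂ) (v : Fin Nv → ℝ)
    (a b : Fin s → ℝ) (ε hm Δt : ℝ) :
    Matrix (Fin s × fIdx r Nv) (Fin s × fIdx r Nv) ℂ :=
  Matrix.of fun pi pj =>
    if (pi.1 : ℕ) = 0 then
      GRblock r Nv Mhat Dm Uhat Phat v (a pj.1.rev) (b pj.1.rev) ε hm Δt pi.2 pj.2
    else (if ((pj.1 : ℕ) + 1 = (pi.1 : ℕ) ∧ pi.2 = pj.2) then 1 else 0)

/-- The amplification matrix `G^{(s,r)} = 𝒢_L⁻¹ 𝒢_R`. -/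
noncomputable def amplification (s r Nv : ℕ) (Mhat Dp Dm : Matrix (Fin r) (Fin r) ℂ)
    (Uhat Phat : Fin Nv → Matrix (Fin r) (Fin r) ℂ) (ω v : Fin Nv → ℝ)
    (a b : Fin s → ℝ) (ε σ hm Δt c : ℝ) :
    Matrix (Fin s × fIdx r Nv) (Fin s × fIdx r Nv) ℂ :=
  (bigGL s r Nv Mhat Dp ω v ε σ hm Δt c)⁻¹ *
    bigGR s r Nv Mhat Dm Uhat Phat v a b ε hm Δt

/-- The blockwise scaling `S_h = diag(σ h I_r, I_{r N_v})`, repeated over the `s` blocks. -/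
noncomputable def scalingS (s r Nv : ℕ) (σ hm : ℝ) :
    Matrix (Fin s × fIdx r Nv) (Fin s × fIdx r Nv) ℂ :=
  Matrix.of fun pi pj =>
    if pi = pj then (Sum.elim (fun _ => ((σ * hm : ℝ) : ℂ)) (fun _ => 1) pi.2) else 0

/-! Multiplying the `ρ̂`-columns by `σ h` (right multiplication by `S_h`) turns `𝒢_L` and `𝒢_R`
into their values at the normalized parameters `(ε / (σ h), 1, 1, Δt / (σ h²))`, up to one and
the same diagonal scaling of the rows (by `σ h²` and `σ² h³` in the first block row). A common
left factor cancels in `𝒢_L⁻¹ 𝒢_R`, so `S_h⁻¹ G S_h` is the amplification matrix at the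
normalized parameters, and these depend only on `ε / (σ h)` and `Δt / (ε h)`, since
`Δt / (σ h²) = ε / (σ h) · Δt / (ε h)`. -/

namespace Matrix

variable {n R : Type*} [Fintype n] [DecidableEq n] [CommRing R]

theorem nonsing_inv_mul_mul_eq_of_mul_eq_mul {S T L R₁ L₀ R₀ : Matrix n n R}
    (hT : IsUnit T.det) (hL : L * S = T * L₀) (hR : R₁ * S = T * R₀) :
    S⁻¹ * (L⁻¹ * R₁) * S = L₀⁻¹ * R₀ := by
  calc S⁻¹ * (L⁻¹ * R₁) * S = (L * S)⁻¹ * (R₁ * S) := by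
        simp only [mul_inv_rev, Matrix.mul_assoc]
    _ = L₀⁻¹ * (T⁻¹ * T) * R₀ := by
        rw [hL, hR, mul_inv_rev]; simp only [Matrix.mul_assoc]
    _ = L₀⁻¹ * R₀ := by rw [nonsing_inv_mul _ hT, Matrix.mul_one]

theorem spectrum_nonsing_inv_mul_mul {S : Matrix n n R} (hS : IsUnit S.det) (A : Matrix n n R) :
    spectrum R (S⁻¹ * A * S) = spectrum R A := by
  obtain ⟨u, rfl⟩ := (isUnit_iff_isUnit_det S).mpr hS
  rw [← coe_units_inv]
  exact spectrum.units_conjugate'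

end Matrix

/-- The diagonal of `S_h` on one block `(ρ̂, ĝ_1, …, ĝ_{N_v})`. -/
noncomputable def blockScale (r Nv : ℕ) (σ hm : ℝ) : fIdx r Nv → ℂ :=
  Sum.elim (fun _ => ((σ * hm : ℝ) : ℂ)) (fun _ => 1)

noncomputable def headRowScale (r Nv : ℕ) (σ hm : ℝ) : fIdx r Nv → ℂ :=
  Sum.elim (fun _ => ((σ * hm ^ 2 : ℝ) : ℂ)) (fun _ => ((σ ^ 2 * hm ^ 3 : ℝ) : ℂ))

noncomputable def rowScale (s r Nv : ℕ) (σ hm : ℝ) : Fin s × fIdx r Nv → ℂ :=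
  fun pi => if (pi.1 : ℕ) = 0 then headRowScale r Nv σ hm pi.2 else blockScale r Nv σ hm pi.2

/-- The paper's `Ĝ^{(s,r)}`, with `α = ε / (σ h)` and `β = Δt / (ε h)`. -/
noncomputable def normalizedAmplification (s r Nv : ℕ) (Mhat Dp Dm : Matrix (Fin r) (Fin r) ℂ)
    (Uhat Phat : Fin Nv → Matrix (Fin r) (Fin r) ℂ) (ω v : Fin Nv → ℝ)
    (a b : Fin s → ℝ) (c α β : ℝ) :
    Matrix (Fin s × fIdx r Nv) (Fin s × fIdx r Nv) ℂ :=
  amplification s r Nv Mhat Dp Dm Uhat Phat ω v a b α 1 1 (α * β) c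

theorem scalingS_eq_diagonal (s r Nv : ℕ) (σ hm : ℝ) :
    scalingS s r Nv σ hm = diagonal fun pi => blockScale r Nv σ hm pi.2 :=
  rfl

theorem isUnit_det_scalingS (s r Nv : ℕ) {σ hm : ℝ} (hσ : σ ≠ 0) (hhm : hm ≠ 0) :
    IsUnit (scalingS s r Nv σ hm).det := by
  rw [scalingS_eq_diagonal, det_diagonal, isUnit_iff_ne_zero,
    Finset.prod_ne_zero_iff]
  rintro ⟨_, _ | _⟩ _ <;> simp [blockScale, hσ, hhm]

theorem isUnit_det_rowScale (s r Nv : ℕ) {σ hm : ℝ} (hσ : σ ≠ 0) (hhm : hm ≠ 0) :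
    IsUnit (diagonal (rowScale s r Nv σ hm)).det := by
  rw [det_diagonal, isUnit_iff_ne_zero, Finset.prod_ne_zero_iff]
  rintro ⟨p, _ | _⟩ _ <;> by_cases hp : (p : ℕ) = 0 <;>
    simp [rowScale, headRowScale, blockScale, hp, hσ, hhm]

section Scaling

variable {r Nv : ℕ} {ε σ hm Δt : ℝ}

theorem GLblock_mul_blockScale (Mhat Dp : Matrix (Fin r) (Fin r) ℂ) (ω v : Fin Nv → ℝ) (c : ℝ)
    (hε : ε ≠ 0) (hσ : σ ≠ 0) (hhm : hm ≠ 0) (i j : fIdx r Nv) :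
    GLblock r Nv Mhat Dp ω v ε σ hm Δt c i j * blockScale r Nv σ hm j
      = headRowScale r Nv σ hm i *
        GLblock r Nv Mhat Dp ω v (ε / (σ * hm)) 1 1 (ε / (σ * hm) * (Δt / (ε * hm))) c i j := by
  rcases i with i | ⟨q, i⟩ <;> rcases j with j | ⟨q', j⟩ <;>
    simp only [GLblock, blockScale, headRowScale, fromBlocks_apply₁₁, fromBlocks_apply₁₂,
      fromBlocks_apply₂₁, fromBlocks_apply₂₂, Matrix.smul_apply, Matrix.zero_apply, of_apply,
      Sum.elim_inl, Sum.elim_inr, smul_eq_mul, mul_zero, zero_mul, mul_one]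
  all_goals try split_ifs
  all_goals first | rfl | (push_cast; field_simp [hε, hσ, hhm]; try ring)

theorem GRblock_mul_blockScale (Mhat Dm : Matrix (Fin r) (Fin r) ℂ)
    (Uhat Phat : Fin Nv → Matrix (Fin r) (Fin r) ℂ) (v : Fin Nv → ℝ) (ak bk : ℝ)
    (hε : ε ≠ 0) (hσ : σ ≠ 0) (hhm : hm ≠ 0) (i j : fIdx r Nv) :
    GRblock r Nv Mhat Dm Uhat Phat v ak bk ε hm Δt i j * blockScale r Nv σ hm j
      = headRowScale r Nv σ hm i *
        GRblock r Nv Mhat Dm Uhat Phat v ak bk (ε / (σ * hm)) 1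
          (ε / (σ * hm) * (Δt / (ε * hm))) i j := by
  rcases i with i | ⟨q, i⟩ <;> rcases j with j | ⟨q', j⟩ <;>
    simp only [GRblock, blockScale, headRowScale, fromBlocks_apply₁₁, fromBlocks_apply₁₂,
      fromBlocks_apply₂₁, fromBlocks_apply₂₂, Matrix.smul_apply, Matrix.zero_apply, of_apply,
      Sum.elim_inl, Sum.elim_inr, smul_eq_mul, mul_zero, mul_one]
  all_goals try split_ifs
  all_goals first | rfl | (push_cast; field_simp [hε, hσ, hhm]; try ring)

variable {s : ℕ}

theorem bigGL_mul_scalingS (Mhat Dp : Matrix (Fin r) (Fin r) ℂ) (ω v : Fin Nv → ℝ) (c : ℝ)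
    (hε : ε ≠ 0) (hσ : σ ≠ 0) (hhm : hm ≠ 0) :
    bigGL s r Nv Mhat Dp ω v ε σ hm Δt c * scalingS s r Nv σ hm
      = diagonal (rowScale s r Nv σ hm) *
        bigGL s r Nv Mhat Dp ω v (ε / (σ * hm)) 1 1 (ε / (σ * hm) * (Δt / (ε * hm))) c := by
  ext ⟨p, i⟩ ⟨p', j⟩
  rw [scalingS_eq_diagonal, mul_diagonal, diagonal_mul]
  by_cases hp : (p : ℕ) = 0
  · by_cases hp' : (p' : ℕ) = 0
    · simpa [bigGL, rowScale, hp, hp'] using GLblock_mul_blockScale Mhat Dp ω v c hε hσ hhm i j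
    · simp [bigGL, hp, hp']
  · by_cases hpi : (p, i) = (p', j)
    · simp_all [bigGL, rowScale]
    · simp [bigGL, hp, hpi]

theorem bigGR_mul_scalingS (Mhat Dm : Matrix (Fin r) (Fin r) ℂ)
    (Uhat Phat : Fin Nv → Matrix (Fin r) (Fin r) ℂ) (v : Fin Nv → ℝ) (a b : Fin s → ℝ)
    (hε : ε ≠ 0) (hσ : σ ≠ 0) (hhm : hm ≠ 0) :
    bigGR s r Nv Mhat Dm Uhat Phat v a b ε hm Δt * scalingS s r Nv σ hm
      = diagonal (rowScale s r Nv σ hm) *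
        bigGR s r Nv Mhat Dm Uhat Phat v a b (ε / (σ * hm)) 1
          (ε / (σ * hm) * (Δt / (ε * hm))) := by
  ext ⟨p, i⟩ ⟨p', j⟩
  rw [scalingS_eq_diagonal, mul_diagonal, diagonal_mul]
  by_cases hp : (p : ℕ) = 0
  · simpa [bigGR, rowScale, hp] using
      GRblock_mul_blockScale Mhat Dm Uhat Phat v (a p'.rev) (b p'.rev) hε hσ hhm i j
  · by_cases hshift : (p' : ℕ) + 1 = p ∧ i = j
    · obtain ⟨_, rfl⟩ := hshift
      simp_all [bigGR, rowScale]
    · simp [bigGR, hp, hshift]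

theorem scalingS_conj_amplification (Mhat Dp Dm : Matrix (Fin r) (Fin r) ℂ)
    (Uhat Phat : Fin Nv → Matrix (Fin r) (Fin r) ℂ) (ω v : Fin Nv → ℝ) (a b : Fin s → ℝ) (c : ℝ)
    (hε : ε ≠ 0) (hσ : σ ≠ 0) (hhm : hm ≠ 0) :
    (scalingS s r Nv σ hm)⁻¹ * amplification s r Nv Mhat Dp Dm Uhat Phat ω v a b ε σ hm Δt c *
        scalingS s r Nv σ hm
      = normalizedAmplification s r Nv Mhat Dp Dm Uhat Phat ω v a b c (ε / (σ * hm))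
          (Δt / (ε * hm)) :=
  nonsing_inv_mul_mul_eq_of_mul_eq_mul (isUnit_det_rowScale s r Nv hσ hhm)
    (bigGL_mul_scalingS Mhat Dp ω v c hε hσ hhm)
    (bigGR_mul_scalingS Mhat Dm Uhat Phat v a b hε hσ hhm)

end Scaling

theorem stmt_12_general (s r Nv : ℕ)
    (Mhat Dp Dm : Matrix (Fin r) (Fin r) ℂ)
    (Uhat Phat : Fin Nv → Matrix (Fin r) (Fin r) ℂ)
    (ω v : Fin Nv → ℝ)
    (a b : Fin s → ℝ) (c : ℝ) :
    ∃ Ghat : ℝ → ℝ → Matrix (Fin s × fIdx r Nv) (Fin s × fIdx r Nv) ℂ,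
      ∀ ε σ hm Δt : ℝ, 0 < ε → 0 < σ → 0 < hm → 0 < Δt →
        (scalingS s r Nv σ hm)⁻¹ *
            amplification s r Nv Mhat Dp Dm Uhat Phat ω v a b ε σ hm Δt c *
            scalingS s r Nv σ hm
          = Ghat (ε / (σ * hm)) (Δt / (ε * hm)) ∧
        spectrum ℂ (amplification s r Nv Mhat Dp Dm Uhat Phat ω v a b ε σ hm Δt c)
          = spectrum ℂ (Ghat (ε / (σ * hm)) (Δt / (ε * hm))) := by
  refine ⟨normalizedAmplification s r Nv Mhat Dp Dm Uhat Phat ω v a b c,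
    fun ε σ hm Δt hε hσ hhm _ => ?_⟩
  have hconj := scalingS_conj_amplification (Δt := Δt) Mhat Dp Dm Uhat Phat ω v a b c
    hε.ne' hσ.ne' hhm.ne'
  refine ⟨hconj, ?_⟩
  rw [← hconj, spectrum_nonsing_inv_mul_mul (isUnit_det_scalingS s r Nv hσ.ne' hhm.ne')]

/-- Scaling structure of the Fourier amplification matrix (σ_a = 0): conjugating
`G^{(s,r)}(ε, σ_{s,m}, h, Δt)` by the explicit block-diagonal scaling
`S_h = diag(σ_{s,m} h I_r, I_{r N_v})` yields a matrix `Ĝ^{(s,r)}` depending on the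
parameters only through the ratios `ε/(σ_{s,m} h)` and `Δt/(ε h)`; consequently the
spectrum of `G^{(s,r)}` depends only on these two ratios. -/
theorem stmt_12 (s r Nv : ℕ) (hs : 1 ≤ s) (hr : 1 ≤ r)
    (Mhat Dp Dm : Matrix (Fin r) (Fin r) ℂ)
    (Uhat Phat : Fin Nv → Matrix (Fin r) (Fin r) ℂ)
    (ω v : Fin Nv → ℝ)
    (hP : ∀ q, Phat q = ((ω q : ℝ) : ℂ) • Uhat q)
    (hM : IsUnit Mhat.det)
    (a b : Fin s → ℝ) (c : ℝ) (hc : 0 < c) :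
    ∃ Ghat : ℝ → ℝ → Matrix (Fin s × fIdx r Nv) (Fin s × fIdx r Nv) ℂ,
      ∀ ε σ hm Δt : ℝ, 0 < ε → 0 < σ → 0 < hm → 0 < Δt →
        (scalingS s r Nv σ hm)⁻¹ *
            amplification s r Nv Mhat Dp Dm Uhat Phat ω v a b ε σ hm Δt c *
            scalingS s r Nv σ hm
          = Ghat (ε / (σ * hm)) (Δt / (ε * hm)) ∧
        spectrum ℂ (amplification s r Nv Mhat Dp Dm Uhat Phat ω v a b ε σ hm Δt c)
          = spectrum ℂ (Ghat (ε / (σ * hm)) (Δt / (ε * hm))) :=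
  stmt_12_general s r Nv Mhat Dp Dm Uhat Phat ω v a b c
end

section
/- Asymptotic limit of the Strategy-1 micro update: assume σ_s, σ_a constant with σ_s > 0, fix h and Δt, and suppose ρ_h^{n+k} = O(1) and g_{h,q}^{n+k} = O(1) for all k = 0,...,s−1 and all q as ε → 0. Then the updated micro variable satisfies g_{h,q}^{n+s} = −(v_q/(c_s σ_s)) Σ_{k=0}^{s-1} b_k D_h^- ρ_h^{n+k} + O(ε). -/
/-!
With `κ = Δt c σ_s`, the update reads `(ε² + κ) g = ε² A − y − ε B` with `y = Δt v_q Σ b_k D_h^- ρ_k`.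
Then `(ε² + κ) (g + κ⁻¹ y) = ε² (A + κ⁻¹ y) − ε B`, and since `A`, `B`, `y` are `O(1)` (the operators
`D_h^-` and `D_h^{up}` act on finite-dimensional spaces, hence are bounded) while `(ε² + κ)⁻¹ → κ⁻¹`,
`g + κ⁻¹ y = O(ε)`; finally `κ⁻¹ Δt v_q = v_q / (c σ_s)`.
-/

open Finset Filter Topology

open Asymptotics

theorem add_inv_smul_eq_of_smul_eq {E : Type*} [AddCommGroup E] [Module ℝ E]
    {ε κ : ℝ} {x y A B : E} (hεκ : ε ^ 2 + κ ≠ 0) (hκ : κ ≠ 0)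
    (h : (ε ^ 2 + κ) • x = ε ^ 2 • A - y - ε • B) :
    x + κ⁻¹ • y = (ε ^ 2 + κ)⁻¹ • (ε ^ 2 • (A + κ⁻¹ • y) - ε • B) := by
  rw [eq_inv_smul_iff₀ hεκ, smul_add, h, smul_add, add_smul, smul_smul κ, mul_inv_cancel₀ hκ]
  module

theorem isBigO_add_inv_smul_of_smul_eq {E : Type*} [NormedAddCommGroup E] [NormedSpace ℝ E]
    {l : Filter ℝ} (hl : l ≤ 𝓝 0) {κ : ℝ} (hκ : 0 < κ) {x y A B : ℝ → E}
    (h : ∀ᶠ ε in l, (ε ^ 2 + κ) • x ε = ε ^ 2 • A ε - y ε - ε • B ε)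
    (hA : A =O[l] fun _ => (1 : ℝ)) (hB : B =O[l] fun _ => (1 : ℝ))
    (hy : y =O[l] fun _ => (1 : ℝ)) :
    (fun ε => x ε + κ⁻¹ • y ε) =O[l] fun ε => ε := by
  have hcoef : (fun ε : ℝ => (ε ^ 2 + κ)⁻¹) =O[l] fun _ => (1 : ℝ) :=
    Tendsto.isBigO_one ℝ <| (((continuous_id.pow 2).add continuous_const).continuousAt.inv₀
      (by simp [hκ.ne'])).tendsto.mono_left hl
  have hsq : (fun ε : ℝ => ε ^ 2) =O[l] fun ε => ε :=
    ((isLittleO_pow_id one_lt_two).isBigO).mono hl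
  have hrhs : (fun ε => ε ^ 2 • (A ε + κ⁻¹ • y ε) - ε • B ε) =O[l] fun ε => ε := by
    refine IsBigO.sub ?_ ?_
    · simpa using hsq.smul (hA.add (hy.const_smul_left κ⁻¹))
    · simpa using (isBigO_refl (fun ε : ℝ => ε) l).smul hB
  have hx : (fun ε => x ε + κ⁻¹ • y ε)
      =ᶠ[l] fun ε => (ε ^ 2 + κ)⁻¹ • (ε ^ 2 • (A ε + κ⁻¹ • y ε) - ε • B ε) :=
    h.mono fun ε hε => add_inv_smul_eq_of_smul_eq (by positivity) hκ.ne' hε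
  exact (hcoef.smul hrhs).congr' hx.symm (by simp)

theorem stmt_16_general {V : Type*} [NormedAddCommGroup V] [NormedSpace ℝ V]
    [FiniteDimensional ℝ V]
    (Nv s : ℕ)
    (a b : Fin s → ℝ) (c Δt σs σa : ℝ) (hc : 0 < c) (hΔt : 0 < Δt) (hσs : 0 < σs)
    (v : Fin Nv → ℝ)
    (Dm : V →ₗ[ℝ] V)                                  -- the DG derivative 𝒟_h^-
    (T : (Fin Nv → V) →ₗ[ℝ] (Fin Nv → V))             -- q ↦ 𝒟_h^{up}(·;v_q) − ⟨𝒟_h^{up}(·;v)⟩_h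
    (ρprev : ℝ → Fin s → V) (gprev : ℝ → Fin s → Fin Nv → V) (gnew : ℝ → Fin Nv → V)
    -- the Strategy-1 micro update, for each ε > 0
    (hrec : ∀ ε > (0 : ℝ), ∀ q : Fin Nv,
      (ε ^ 2 + Δt * c * σs) • gnew ε q
        = ε ^ 2 • (∑ k : Fin s, (a k - Δt * σa * b k) • gprev ε k q)
          - Δt • ((v q) • ∑ k : Fin s, b k • Dm (ρprev ε k))
          - (Δt * ε) • (∑ k : Fin s, b k • T (gprev ε k) q))
    -- the previous solutions are O(1) as ε → 0⁺
    (hbdd : ∃ C : ℝ, ∀ᶠ ε in 𝓝[>] (0 : ℝ), ∀ k : Fin s,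
      ‖ρprev ε k‖ ≤ C ∧ ∀ q, ‖gprev ε k q‖ ≤ C) :
    -- conclusion: g_{h,q}^{n+s} + (v_q/(c σ_s)) Σ_k b_k 𝒟_h^- ρ_h^{n+k} = O(ε)
    ∀ q : Fin Nv, ∃ C : ℝ, ∀ᶠ ε in 𝓝[>] (0 : ℝ),
      ‖gnew ε q + (v q / (c * σs)) • ∑ k : Fin s, b k • Dm (ρprev ε k)‖ ≤ C * ε := by
  obtain ⟨C, hC⟩ := hbdd
  have hρ (k : Fin s) : (fun ε => ρprev ε k) =O[𝓝[>] 0] fun _ => (1 : ℝ) :=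
    .of_bound C (hC.mono fun ε hε => by simpa using (hε k).1)
  have hg (k : Fin s) : (fun ε => gprev ε k) =O[𝓝[>] 0] fun _ => (1 : ℝ) :=
    isBigO_pi.2 fun q => .of_bound C (hC.mono fun ε hε => by simpa using (hε k).2 q)
  intro q
  have hS : (fun ε => ∑ k, b k • Dm (ρprev ε k)) =O[𝓝[>] 0] fun _ => (1 : ℝ) :=
    .fun_sum fun k _ =>
      ((Dm.toContinuousLinearMap.isBigO_comp _ _).trans (hρ k)).const_smul_left (b k)
  have hA : (fun ε => ∑ k, (a k - Δt * σa * b k) • gprev ε k q)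
      =O[𝓝[>] 0] fun _ => (1 : ℝ) :=
    .fun_sum fun k _ => (isBigO_pi.1 (hg k) q).const_smul_left _
  have hB : (fun ε => Δt • ∑ k, b k • T (gprev ε k) q) =O[𝓝[>] 0] fun _ => (1 : ℝ) :=
    (IsBigO.fun_sum fun k _ => (isBigO_pi.1 ((T.toContinuousLinearMap.isBigO_comp _ _).trans
      (hg k)) q).const_smul_left (b k)).const_smul_left Δt
  have hκ : 0 < Δt * c * σs := by positivity
  have hO := isBigO_add_inv_smul_of_smul_eq nhdsWithin_le_nhds hκ
    (x := fun ε => gnew ε q) (y := fun ε => Δt • v q • ∑ k, b k • Dm (ρprev ε k))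
    (eventually_mem_nhdsWithin.mono fun ε hε => by rw [hrec ε hε q]; module)
    hA hB ((hS.const_smul_left _).const_smul_left _)
  have hcoef : (Δt * c * σs)⁻¹ * Δt * v q = v q / (c * σs) := by field_simp
  obtain ⟨C', hC'⟩ := hO.bound
  refine ⟨C', (hC'.and eventually_mem_nhdsWithin).mono fun ε ⟨hε, hpos⟩ => ?_⟩
  rwa [smul_smul, smul_smul, hcoef, Real.norm_of_nonneg (le_of_lt hpos)] at hε

/-- Asymptotic limit of the Strategy-1 micro update: with constant `σ_s > 0`, `σ_a`,
fixed `h` and `Δt`, and `O(1)` previous numerical solutions, the updated micro variable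
satisfies `g_{h,q}^{n+s} = −(v_q/(c_s σ_s)) Σ_k b_k 𝒟_h^- ρ_h^{n+k} + O(ε)` as `ε → 0⁺`. -/
theorem stmt_16 {V : Type*} [NormedAddCommGroup V] [NormedSpace ℝ V]
    [FiniteDimensional ℝ V]
    (Nv s : ℕ) (hs : 1 ≤ s)
    (a b : Fin s → ℝ) (c Δt σs σa : ℝ) (hc : 0 < c) (hΔt : 0 < Δt) (hσs : 0 < σs)
    (hcb : c = ∑ k, b k)
    (v : Fin Nv → ℝ)
    (Dm : V →ₗ[ℝ] V)                                  -- the DG derivative 𝒟_h^-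
    (T : (Fin Nv → V) →ₗ[ℝ] (Fin Nv → V))             -- q ↦ 𝒟_h^{up}(·;v_q) − ⟨𝒟_h^{up}(·;v)⟩_h
    (ρprev : ℝ → Fin s → V) (gprev : ℝ → Fin s → Fin Nv → V) (gnew : ℝ → Fin Nv → V)
    -- the Strategy-1 micro update, for each ε > 0
    (hrec : ∀ ε > (0 : ℝ), ∀ q : Fin Nv,
      (ε ^ 2 + Δt * c * σs) • gnew ε q
        = ε ^ 2 • (∑ k : Fin s, (a k - Δt * σa * b k) • gprev ε k q)
          - Δt • ((v q) • ∑ k : Fin s, b k • Dm (ρprev ε k))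
          - (Δt * ε) • (∑ k : Fin s, b k • T (gprev ε k) q))
    -- the previous solutions are O(1) as ε → 0⁺
    (hbdd : ∃ C : ℝ, ∀ᶠ ε in 𝓝[>] (0 : ℝ), ∀ k : Fin s,
      ‖ρprev ε k‖ ≤ C ∧ ∀ q, ‖gprev ε k q‖ ≤ C) :
    -- conclusion: g_{h,q}^{n+s} + (v_q/(c σ_s)) Σ_k b_k 𝒟_h^- ρ_h^{n+k} = O(ε)
    ∀ q : Fin Nv, ∃ C : ℝ, ∀ᶠ ε in 𝓝[>] (0 : ℝ),
      ‖gnew ε q + (v q / (c * σs)) • ∑ k : Fin s, b k • Dm (ρprev ε k)‖ ≤ C * ε :=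
  stmt_16_general Nv s a b c Δt σs σa hc hΔt hσs v Dm T ρprev gprev gnew hrec hbdd
end

section
/- Boundedness of ρ in the Strategy-3 limit via coercivity: suppose (1 + Δt c_s σ_a) ρ = κ ⟨v²⟩ D_h^+ D_h^- ρ + F with κ = (Δt c_s)²/(ε² + Δt c_s(σ_s + ε²σ_a)) > 0, where D_h^+ = −(D_h^-)^T (periodic boundary conditions). Then (1 + Δt c_s σ_a)‖ρ‖² + κ⟨v²⟩‖D_h^- ρ‖² = (F, ρ), and consequently ‖ρ‖ ≤ ‖F‖/(1 + Δt c_s σ_a). -/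
open RealInnerProductSpace

section Coercivity

variable {U : Type*} [NormedAddCommGroup U] [InnerProductSpace ℝ U]

/-- Testing `a • ρ = b • B (A ρ) + F` against `ρ`: since `B = -Aᵀ`, the middle term contributes
`-b ‖A ρ‖²`. -/
theorem energy_identity_of_neg_adjoint {A B : U → U} (hadj : ∀ u w, ⟪B u, w⟫ = -⟪u, A w⟫)
    {a b : ℝ} {ρ F : U} (h : a • ρ = b • B (A ρ) + F) :
    a * ‖ρ‖ ^ 2 + b * ‖A ρ‖ ^ 2 = ⟪F, ρ⟫ := by
  have htest := congrArg (⟪·, ρ⟫) h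
  simp only [inner_add_left, real_inner_smul_left, hadj, real_inner_self_eq_norm_sq] at htest
  linarith

theorem norm_le_norm_div_of_mul_norm_sq_le_inner {a : ℝ} (ha : 0 < a) {ρ F : U}
    (h : a * ‖ρ‖ ^ 2 ≤ ⟪F, ρ⟫) : ‖ρ‖ ≤ ‖F‖ / a := by
  rw [le_div_iff₀ ha]
  rcases (norm_nonneg ρ).eq_or_lt with hρ | hρ
  · rw [← hρ, zero_mul]
    exact norm_nonneg F
  · have hcs : a * ‖ρ‖ * ‖ρ‖ ≤ ‖F‖ * ‖ρ‖ := by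
      nlinarith [real_inner_le_norm F ρ]
    nlinarith [le_of_mul_le_mul_right hcs hρ]

end Coercivity

theorem stmt_17_general {U : Type*} [NormedAddCommGroup U] [InnerProductSpace ℝ U]
    (Dm Dp : U →ₗ[ℝ] U)
    (hadj : ∀ u w : U, ⟪Dp u, w⟫ = -⟪u, Dm w⟫)
    (ε Δt c σs σa v2 κ : ℝ)
    (hΔt : 0 < Δt) (hc : 0 < c) (hσs : 0 < σs) (hσa : 0 ≤ σa) (hv2 : 0 < v2)
    (hκ : κ = (Δt * c) ^ 2 / (ε ^ 2 + Δt * c * (σs + ε ^ 2 * σa)))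
    (ρ F : U)
    (heq : (1 + Δt * c * σa) • ρ = (κ * v2) • Dp (Dm ρ) + F) :
    ((1 + Δt * c * σa) * ‖ρ‖ ^ 2 + κ * v2 * ‖Dm ρ‖ ^ 2 = ⟪F, ρ⟫) ∧
    ‖ρ‖ ≤ ‖F‖ / (1 + Δt * c * σa) := by
  have hκ0 : 0 ≤ κ := by
    rw [hκ]
    positivity
  have energy := energy_identity_of_neg_adjoint hadj heq
  refine ⟨energy, norm_le_norm_div_of_mul_norm_sq_le_inner (by positivity) ?_⟩
  rw [← energy]
  exact le_add_of_nonneg_right (by positivity)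

/-- Coercivity bound for the Strategy-3 limit: if
`(1 + Δt c σ_a) ρ = κ⟨v²⟩ 𝒟_h^+ 𝒟_h^- ρ + F` with
`κ = (Δt c)²/(ε² + Δt c(σ_s + ε²σ_a))` and `𝒟_h^+ = −(𝒟_h^-)ᵀ`, then
`(1 + Δt c σ_a)‖ρ‖² + κ⟨v²⟩‖𝒟_h^- ρ‖² = (F, ρ)` and `‖ρ‖ ≤ ‖F‖/(1 + Δt c σ_a)`. -/
theorem stmt_17 {U : Type*} [NormedAddCommGroup U] [InnerProductSpace ℝ U]
    (Dm Dp : U →ₗ[ℝ] U)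
    (hadj : ∀ u w : U, ⟪Dp u, w⟫ = -⟪u, Dm w⟫)
    (ε Δt c σs σa v2 κ : ℝ)
    (hε : 0 < ε) (hΔt : 0 < Δt) (hc : 0 < c) (hσs : 0 < σs) (hσa : 0 ≤ σa) (hv2 : 0 < v2)
    (hκ : κ = (Δt * c) ^ 2 / (ε ^ 2 + Δt * c * (σs + ε ^ 2 * σa)))
    (ρ F : U)
    (heq : (1 + Δt * c * σa) • ρ = (κ * v2) • Dp (Dm ρ) + F) :
    ((1 + Δt * c * σa) * ‖ρ‖ ^ 2 + κ * v2 * ‖Dm ρ‖ ^ 2 = ⟪F, ρ⟫) ∧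
    ‖ρ‖ ≤ ‖F‖ / (1 + Δt * c * σa) :=
  stmt_17_general Dm Dp hadj ε Δt c σs σa v2 κ hΔt hc hσs hσa hv2 hκ ρ F heq
end

section
/- The limiting Strategy-3 scheme is a consistent implicit discretization of the diffusion equation: as ε → 0 with well-prepared bounded data, the macroscopic update of the IMEX-BDF s-step scheme with Strategy 3 becomes ρ_h^{n+s} = Σ_{k=0}^{s-1} a_k ρ_h^{n+k} + Δt c_s ( ⟨v²⟩ D_h^+ ( σ_s^{-1} D_h^- ρ_h^{n+s} ) − σ_a ρ_h^{n+s} + G_h ), and the linear system for ρ_h^{n+s} is uniquely solvable since the operator (1 + Δt c_s σ_a) I − Δt c_s ⟨v²⟩ D_h^+ (σ_s^{-1} D_h^-) is symmetric positive definite when D_h^+ = −(D_h^-)^T and σ_s > 0 constant. -/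
open Finset Filter Topology RealInnerProductSpace

/-!
In the micro update the terms carrying `ε²` or `ε` multiply bounded data and vanish as `ε → 0⁺`,
which leaves the Chapman–Enskog closure `σ_s g_q = -v_q D_h^- ρ` in the limit. Substituting it
into the macro update turns the flux `D_h^+ ⟨v g⟩` into the diffusion term `-⟨v²⟩ σ_s⁻¹ D_h^+ D_h^- ρ`.
Since `D_h^+ = -(D_h^-)ᵀ`, the limiting operator `L = α I - β D_h^+ D_h^-` satisfies
`⟪L ρ, ρ⟫ = α ‖ρ‖² + β ‖D_h^- ρ‖²`, so it is injective, hence bijective in finite dimension.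
-/

open Asymptotics

section Vanishing

variable {α ι κ E : Type*} [Fintype ι] [Fintype κ] [NormedAddCommGroup E] [NormedSpace ℝ E]

lemma isBigO_one_sum_smul {l : Filter α} {x : α → ι → E} (a : ι → ℝ)
    (hx : ∀ i, (fun t => x t i) =O[l] fun _ => (1 : ℝ)) :
    (fun t => ∑ i, a i • x t i) =O[l] fun _ => (1 : ℝ) := by
  refine (IsBigO.sum (s := univ) fun i _ => (hx i).const_smul_left (a i)).congr_left fun t => ?_
  simp only [Finset.sum_apply, Pi.smul_apply]

lemma tendsto_smul_zero_of_isBigO_one {l : Filter α} {f : α → ℝ} {x : α → E}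
    (hf : Tendsto f l (𝓝 0)) (hx : x =O[l] fun _ => (1 : ℝ)) :
    Tendsto (fun t => f t • x t) l (𝓝 0) :=
  hf.zero_smul_isBoundedUnder_le ((isBigO_one_iff ℝ).1 hx)

lemma tendsto_sq_smul_sub_mul_smul_zero {l : Filter ℝ} (hl : l ≤ 𝓝 0) (a b : ι → ℝ)
    (T : (κ → E) →L[ℝ] (κ → E)) {g : ℝ → ι → κ → E}
    (hg : ∀ i j, (fun ε => g ε i j) =O[l] fun _ => (1 : ℝ)) (Δt : ℝ) (j : κ) :
    Tendsto (fun ε => ε ^ 2 • ∑ i, a i • g ε i j - (Δt * ε) • ∑ i, b i • T (g ε i) j)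
      l (𝓝 0) := by
  have hsq : Tendsto (fun ε : ℝ => ε ^ 2) l (𝓝 0) :=
    ((continuous_pow 2).tendsto' 0 0 (by norm_num)).mono_left hl
  have hlin : Tendsto (fun ε : ℝ => Δt * ε) l (𝓝 0) :=
    ((continuous_const_mul Δt).tendsto' 0 0 (mul_zero Δt)).mono_left hl
  have hTg : ∀ i, (fun ε => T (g ε i) j) =O[l] fun _ => (1 : ℝ) := fun i =>
    isBigO_pi.1 ((T.isBigO_comp _ l).trans (isBigO_pi.2 (hg i))) j
  simpa using (tendsto_smul_zero_of_isBigO_one hsq (isBigO_one_sum_smul a fun i => hg i j)).sub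
    (tendsto_smul_zero_of_isBigO_one hlin (isBigO_one_sum_smul b hTg))

end Vanishing

lemma micro_limit_eq_closure {U ι κ : Type*} [NormedAddCommGroup U] [NormedSpace ℝ U]
    [FiniteDimensional ℝ U] [Fintype ι] [Fintype κ] (a b : ι → ℝ)
    (T : (κ → U) →ₗ[ℝ] (κ → U)) (Dm : U →ₗ[ℝ] U) (v : κ → ℝ) {Δt c σs σa : ℝ}
    (hcoef : Δt * c * σs ≠ 0) {gprev : ℝ → ι → κ → U} {gnew : ℝ → κ → U} {ρnew : ℝ → U}
    {glim : κ → U} {ρstar : U}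
    (hmic : ∀ᶠ ε in 𝓝[>] (0 : ℝ), ∀ q, (ε ^ 2 + Δt * c * (σs + ε ^ 2 * σa)) • gnew ε q
        = ε ^ 2 • (∑ k, a k • gprev ε k q) - (Δt * ε) • (∑ k, b k • T (gprev ε k) q)
          - (Δt * c * v q) • Dm (ρnew ε))
    (hg : ∀ k q, (fun ε => gprev ε k q) =O[𝓝[>] (0 : ℝ)] fun _ => (1 : ℝ))
    (hρ : Tendsto ρnew (𝓝[>] 0) (𝓝 ρstar)) (hgnew : ∀ q, Tendsto (gnew · q) (𝓝[>] 0) (𝓝 (glim q)))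
    (q : κ) : glim q = (-v q / σs) • Dm ρstar := by
  have hcoef_lim : Tendsto (fun ε : ℝ => ε ^ 2 + Δt * c * (σs + ε ^ 2 * σa)) (𝓝[>] 0)
      (𝓝 (Δt * c * σs)) :=
    ((by fun_prop : Continuous fun ε : ℝ => ε ^ 2 + Δt * c * (σs + ε ^ 2 * σa)).tendsto' 0 _
      (by ring)).mono_left nhdsWithin_le_nhds
  have hrhs := (tendsto_sq_smul_sub_mul_smul_zero nhdsWithin_le_nhds a b
    (LinearMap.toContinuousLinearMap T) hg Δt q).sub
    (((Dm.continuous_of_finiteDimensional.tendsto ρstar).comp hρ).const_smul (Δt * c * v q))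
  have hlim := tendsto_nhds_unique ((hcoef_lim.smul (hgnew q)).congr'
    (by filter_upwards [hmic] with ε h using h q)) hrhs
  rw [zero_sub, ← neg_smul] at hlim
  rw [← smul_right_injective U hcoef |>.eq_iff, hlim, smul_smul]
  congr 1
  field_simp [right_ne_zero_of_mul hcoef]

section Solvability

variable {U : Type*} [NormedAddCommGroup U] [InnerProductSpace ℝ U] {Dm Dp : U →ₗ[ℝ] U}

lemma inner_smul_sub_smul_comp_self (hadj : ∀ u w : U, ⟪Dp u, w⟫ = -⟪u, Dm w⟫) (α β : ℝ)
    (x : U) : ⟪α • x - β • Dp (Dm x), x⟫ = α * ‖x‖ ^ 2 + β * ‖Dm x‖ ^ 2 := by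
  rw [inner_sub_left, real_inner_smul_left, real_inner_smul_left, hadj,
    real_inner_self_eq_norm_sq, real_inner_self_eq_norm_sq]
  ring

lemma existsUnique_smul_sub_smul_comp_eq [FiniteDimensional ℝ U]
    (hadj : ∀ u w : U, ⟪Dp u, w⟫ = -⟪u, Dm w⟫) {α β : ℝ} (hα : 0 < α) (hβ : 0 ≤ β) (F : U) :
    ∃! ρ : U, α • ρ - β • Dp (Dm ρ) = F := by
  let L : U →ₗ[ℝ] U := α • LinearMap.id - β • (Dp ∘ₗ Dm)
  have hinj : Function.Injective L := by
    rw [← LinearMap.ker_eq_bot, LinearMap.ker_eq_bot']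
    intro x hx
    have hcoercive : α * ‖x‖ ^ 2 + β * ‖Dm x‖ ^ 2 = 0 := by
      rw [← inner_smul_sub_smul_comp_self hadj, ← inner_zero_left x]
      exact congrArg (⟪·, x⟫) hx
    have : ‖x‖ ^ 2 = 0 := by nlinarith [sq_nonneg ‖x‖, mul_nonneg hβ (sq_nonneg ‖Dm x‖)]
    simpa using this
  exact Function.Bijective.existsUnique ⟨hinj, LinearMap.injective_iff_surjective.1 hinj⟩ F

end Solvability

theorem stmt_18_general {U : Type*} [NormedAddCommGroup U] [InnerProductSpace ℝ U]
    [FiniteDimensional ℝ U]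
    (Nv s : ℕ)
    (a b : Fin s → ℝ) (c : ℝ) (hcpos : 0 < c)
    (Δt σs σa : ℝ) (hΔt : 0 < Δt) (hσs : 0 < σs) (hσa : 0 ≤ σa)
    (ω v : Fin Nv → ℝ) (hω : ∀ q, 0 < ω q)
    (Dm Dp : U →ₗ[ℝ] U)
    (hadj : ∀ u w : U, ⟪Dp u, w⟫ = -⟪u, Dm w⟫)
    (T : (Fin Nv → U) →ₗ[ℝ] (Fin Nv → U))   -- the explicit free-streaming operator
    (Gh : U)
    (ρprev : ℝ → Fin s → U) (gprev : ℝ → Fin s → Fin Nv → U)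
    (ρnew : ℝ → U) (gnew : ℝ → Fin Nv → U)
    -- Strategy-3 macro update for each ε > 0
    (hmac : ∀ ε > (0 : ℝ),
      ρnew ε = (∑ k : Fin s, a k • ρprev ε k)
        - (Δt * c) • (Dp (∑ q, (ω q * v q) • gnew ε q) + σa • ρnew ε - Gh))
    -- Strategy-3 micro update for each ε > 0
    (hmic : ∀ ε > (0 : ℝ), ∀ q : Fin Nv,
      (ε ^ 2 + Δt * c * (σs + ε ^ 2 * σa)) • gnew ε q
        = ε ^ 2 • (∑ k : Fin s, a k • gprev ε k q)
          - (Δt * ε) • (∑ k : Fin s, b k • T (gprev ε k) q)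
          - (Δt * c * v q) • Dm (ρnew ε))
    -- well-prepared bounded data
    (hbdd : ∃ C : ℝ, ∀ᶠ ε in 𝓝[>] (0 : ℝ), ∀ k : Fin s,
      ‖ρprev ε k‖ ≤ C ∧ ∀ q, ‖gprev ε k q‖ ≤ C)
    -- convergence as ε → 0⁺
    (ρlim : Fin s → U) (ρstar : U) (glim : Fin Nv → U)
    (hconv1 : ∀ k, Tendsto (fun ε => ρprev ε k) (𝓝[>] (0 : ℝ)) (𝓝 (ρlim k)))
    (hconv2 : Tendsto (fun ε => ρnew ε) (𝓝[>] (0 : ℝ)) (𝓝 ρstar))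
    (hconv3 : ∀ q, Tendsto (fun ε => gnew ε q) (𝓝[>] (0 : ℝ)) (𝓝 (glim q))) :
    -- the limiting implicit diffusion update
    (ρstar = (∑ k : Fin s, a k • ρlim k)
        + (Δt * c) • ((∑ q, ω q * (v q) ^ 2) • Dp ((1 / σs) • Dm ρstar)
            - σa • ρstar + Gh)) ∧
    -- unique solvability of the implicit system
    (∀ F : U, ∃! ρ : U,
      (1 + Δt * c * σa) • ρ
        - (Δt * c * (∑ q, ω q * (v q) ^ 2) / σs) • Dp (Dm ρ) = F) := by
  have hpos : ∀ᶠ ε in 𝓝[>] (0 : ℝ), 0 < ε := self_mem_nhdsWithin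
  obtain ⟨C, hC⟩ := hbdd
  have hg : ∀ k q, (fun ε => gprev ε k q) =O[𝓝[>] (0 : ℝ)] fun _ => (1 : ℝ) := fun k q =>
    IsBigO.of_bound C (by filter_upwards [hC] with ε h using by simpa using (h k).2 q)
  have hclosure : ∀ q, glim q = (-v q / σs) • Dm ρstar :=
    micro_limit_eq_closure a b T Dm v (by positivity : Δt * c * σs ≠ 0)
      (by filter_upwards [hpos] with ε hε using hmic ε hε) hg hconv2 hconv3
  have hflux : ∑ q, (ω q * v q) • glim q = -((∑ q, ω q * v q ^ 2) / σs) • Dm ρstar := by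
    simp_rw [hclosure, smul_smul, ← Finset.sum_smul, Finset.sum_div, ← Finset.sum_neg_distrib]
    congr 1
    exact Finset.sum_congr rfl fun q _ => by ring
  have hflux_lim : Tendsto (fun ε => Dp (∑ q, (ω q * v q) • gnew ε q)) (𝓝[>] 0)
      (𝓝 (Dp (∑ q, (ω q * v q) • glim q))) :=
    (Dp.continuous_of_finiteDimensional.tendsto _).comp
      (tendsto_finsetSum _ fun q _ => (hconv3 q).const_smul _)
  have hmacro : ρstar = (∑ k, a k • ρlim k)
      - (Δt * c) • (Dp (∑ q, (ω q * v q) • glim q) + σa • ρstar - Gh) :=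
    tendsto_nhds_unique (hconv2.congr' (by filter_upwards [hpos] with ε hε using hmac ε hε))
      ((tendsto_finsetSum _ fun k _ => (hconv1 k).const_smul (a k)).sub
        (((hflux_lim.add (hconv2.const_smul σa)).sub_const Gh).const_smul (Δt * c)))
  refine ⟨?_, existsUnique_smul_sub_smul_comp_eq hadj (by positivity) ?_⟩
  · conv_lhs => rw [hmacro, hflux, map_smul]
    rw [map_smul]
    module
  · have := Finset.sum_nonneg fun q (_ : q ∈ univ) => mul_nonneg (hω q).le (sq_nonneg (v q))
    positivity

/-- The limiting Strategy-3 scheme is a consistent implicit discretization of the diffusion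
equation: as `ε → 0⁺` with well-prepared bounded data, the macro update becomes
`ρ_h^{n+s} = Σ_k a_k ρ_h^{n+k} + Δt c_s(⟨v²⟩ 𝒟_h^+(σ_s⁻¹ 𝒟_h^- ρ_h^{n+s}) − σ_a ρ_h^{n+s} + G_h)`,
and the corresponding linear operator is SPD (since `𝒟_h^+ = −(𝒟_h^-)ᵀ`, `σ_s > 0`),
so the implicit system is uniquely solvable. -/
theorem stmt_18 {U : Type*} [NormedAddCommGroup U] [InnerProductSpace ℝ U]
    [FiniteDimensional ℝ U]
    (Nv s : ℕ) [NeZero Nv] (hs : 1 ≤ s)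
    (a b : Fin s → ℝ) (c : ℝ) (ha : ∑ k, a k = 1) (hc : c = ∑ k, b k) (hcpos : 0 < c)
    (Δt σs σa : ℝ) (hΔt : 0 < Δt) (hσs : 0 < σs) (hσa : 0 ≤ σa)
    (ω v : Fin Nv → ℝ) (hω : ∀ q, 0 < ω q) (hω1 : ∑ q, ω q = 1)
    (Dm Dp : U →ₗ[ℝ] U)
    (hadj : ∀ u w : U, ⟪Dp u, w⟫ = -⟪u, Dm w⟫)
    (T : (Fin Nv → U) →ₗ[ℝ] (Fin Nv → U))   -- the explicit free-streaming operator
    (Gh : U)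
    (ρprev : ℝ → Fin s → U) (gprev : ℝ → Fin s → Fin Nv → U)
    (ρnew : ℝ → U) (gnew : ℝ → Fin Nv → U)
    -- Strategy-3 macro update for each ε > 0
    (hmac : ∀ ε > (0 : ℝ),
      ρnew ε = (∑ k : Fin s, a k • ρprev ε k)
        - (Δt * c) • (Dp (∑ q, (ω q * v q) • gnew ε q) + σa • ρnew ε - Gh))
    -- Strategy-3 micro update for each ε > 0
    (hmic : ∀ ε > (0 : ℝ), ∀ q : Fin Nv,
      (ε ^ 2 + Δt * c * (σs + ε ^ 2 * σa)) • gnew ε q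
        = ε ^ 2 • (∑ k : Fin s, a k • gprev ε k q)
          - (Δt * ε) • (∑ k : Fin s, b k • T (gprev ε k) q)
          - (Δt * c * v q) • Dm (ρnew ε))
    -- well-prepared bounded data
    (hbdd : ∃ C : ℝ, ∀ᶠ ε in 𝓝[>] (0 : ℝ), ∀ k : Fin s,
      ‖ρprev ε k‖ ≤ C ∧ ∀ q, ‖gprev ε k q‖ ≤ C)
    -- convergence as ε → 0⁺
    (ρlim : Fin s → U) (ρstar : U) (glim : Fin Nv → U)
    (hconv1 : ∀ k, Tendsto (fun ε => ρprev ε k) (𝓝[>] (0 : ℝ)) (𝓝 (ρlim k)))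
    (hconv2 : Tendsto (fun ε => ρnew ε) (𝓝[>] (0 : ℝ)) (𝓝 ρstar))
    (hconv3 : ∀ q, Tendsto (fun ε => gnew ε q) (𝓝[>] (0 : ℝ)) (𝓝 (glim q))) :
    -- the limiting implicit diffusion update
    (ρstar = (∑ k : Fin s, a k • ρlim k)
        + (Δt * c) • ((∑ q, ω q * (v q) ^ 2) • Dp ((1 / σs) • Dm ρstar)
            - σa • ρstar + Gh)) ∧
    -- unique solvability of the implicit system
    (∀ F : U, ∃! ρ : U,
      (1 + Δt * c * σa) • ρ
        - (Δt * c * (∑ q, ω q * (v q) ^ 2) / σs) • Dp (Dm ρ) = F) :=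
  stmt_18_general Nv s a b c hcpos Δt σs σa hΔt hσs hσa ω v hω Dm Dp hadj T Gh ρprev gprev ρnew gnew
    hmac hmic hbdd ρlim ρstar glim hconv1 hconv2 hconv3
end
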